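/- Let N be a semidirected acyclic graph and T a root component of N. Then T is a tree all of whose edges are undirected. -/

import Mathlib

open scoped Classical

noncomputable section

/-! ## Tags, μ-vectors, cherry types -/

inductive Tag : Type
  | te | hy | rn | ie
deriving DecidableEq, Inhabited

/-- The four cherry types (r2), (r3), (d), (u). -/
inductive CT : Type
  | r2 | r3 | d | u
deriving DecidableEq, Inhabited

/-- The eight cherry kinds: tree/reticulate combined with the four types. -/
inductive CherryKind : Type
  | Tr2 | Tr3 | Td | Tu | Rr2 | Rr3 | Rd | Ru
deriving DecidableEq, Inhabited

def CherryKind.isTree : CherryKind → Bool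
  | .Tr2 | .Tr3 | .Td | .Tu => true
  | _ => false

def CherryKind.ct : CherryKind → CT
  | .Tr2 => .r2 | .Tr3 => .r3 | .Td => .d | .Tu => .u
  | .Rr2 => .r2 | .Rr3 => .r3 | .Rd => .d | .Ru => .u

/-- A simple μ-vector on `n` taxa: coordinate 0 counts paths to hybrid nodes,
coordinate `i.succ` counts paths to the leaf labelled `i`. -/
abbrev MuVec (n : ℕ) := Fin (n + 1) → ℕ

/-- A μ-entry: a multiset of (one or two) tagged simple μ-vectors. -/
abbrev MuEntry (n : ℕ) := Multiset (MuVec n × Tag)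

/-- An edge-based μ-representation: a multiset of μ-entries. -/
abbrev MuRep (n : ℕ) := Multiset (MuEntry n)

/-- Indicator μ-vector `δ_S`. -/
def dlt {n : ℕ} (s : Finset (Fin (n + 1))) : MuVec n := fun i => if i ∈ s then 1 else 0

/-! ## Semidirected multigraphs with labelled leaves -/

/-- A semidirected multigraph on vertex names `ℕ` and edge names `ℕ`;
`dir e = true` means `e` is directed from `tail e` to `head e`;
`dir e = false` means `e` is an undirected edge with endpoints `tail e`, `head e`.
Leaves may be labelled by taxa in `Fin n`. -/
structure Net (n : ℕ) where
  V : Finset ℕ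
  E : Finset ℕ
  tail : ℕ → ℕ
  head : ℕ → ℕ
  dir : ℕ → Bool
  lbl : ℕ → Option (Fin n)

namespace Net

variable {n : ℕ}

def indeg (N : Net n) (v : ℕ) : ℕ :=
  (N.E.filter (fun e => N.dir e = true ∧ N.head e = v)).card
def outdeg (N : Net n) (v : ℕ) : ℕ :=
  (N.E.filter (fun e => N.dir e = true ∧ N.tail e = v)).card
def undeg (N : Net n) (v : ℕ) : ℕ :=
  (N.E.filter (fun e => N.dir e = false ∧ (N.tail e = v ∨ N.head e = v))).card
def deg (N : Net n) (v : ℕ) : ℕ := N.indeg v + N.outdeg v + N.undeg v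

def IsRootNode (N : Net n) (v : ℕ) : Prop := v ∈ N.V ∧ N.indeg v = 0 ∧ N.undeg v = 0
def IsLeafNode (N : Net n) (v : ℕ) : Prop := v ∈ N.V ∧ N.outdeg v = 0 ∧ N.undeg v = 0
def IsHybrid (N : Net n) (v : ℕ) : Prop := 2 ≤ N.indeg v
def IsTreeNode (N : Net n) (v : ℕ) : Prop := N.indeg v ≤ 1

/-- Source of a step `(e, forward?)` of a semidirected walk. -/
def src (N : Net n) (s : ℕ × Bool) : ℕ := if s.2 then N.tail s.1 else N.head s.1
/-- Destination of a step. -/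
def dst (N : Net n) (s : ℕ × Bool) : ℕ := if s.2 then N.head s.1 else N.tail s.1

/-- A step is legal from `u`: the edge is in the graph, directed edges are
traversed forwards, and the step starts at `u`. -/
def stepOK (N : Net n) (u : ℕ) (s : ℕ × Bool) : Prop :=
  s.1 ∈ N.E ∧ (N.dir s.1 = true → s.2 = true) ∧ N.src s = u

/-- `chain N u p x`: `p` is a semidirected walk from `u` to `x`. -/
def chain (N : Net n) : ℕ → List (ℕ × Bool) → ℕ → Prop
  | u, [], x => u = x
  | u, s :: p, x => N.stepOK u s ∧ N.chain (N.dst s) p x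

/-- A semidirected path (walk without repeated vertices) from `u` to `x`. -/
def IsPath (N : Net n) (u x : ℕ) (p : List (ℕ × Bool)) : Prop :=
  u ∈ N.V ∧ N.chain u p x ∧ (u :: p.map N.dst).Nodup

def paths (N : Net n) (u x : ℕ) : Set (List (ℕ × Bool)) := {p | N.IsPath u x p}
def pathsAvoid (N : Net n) (u x : ℕ) (e : ℕ) : Set (List (ℕ × Bool)) :=
  {p | N.IsPath u x p ∧ e ∉ p.map Prod.fst}

/-- `m N u x` : the number of semidirected paths from `u` to `x`. -/
def m (N : Net n) (u x : ℕ) : ℕ := (N.paths u x).ncard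
/-- `mAvoid N u x e` : the number of semidirected paths from `u` to `x` avoiding `e`. -/
def mAvoid (N : Net n) (u x : ℕ) (e : ℕ) : ℕ := (N.pathsAvoid u x e).ncard

/-- One undirected edge joins `u` and `v`. -/
def ustep (N : Net n) (u v : ℕ) : Prop :=
  ∃ e ∈ N.E, N.dir e = false ∧
    ((N.tail e = u ∧ N.head e = v) ∨ (N.tail e = v ∧ N.head e = u))

/-- `u ~ v`: joined by a path consisting solely of undirected edges. -/
def UndirConn (N : Net n) : ℕ → ℕ → Prop := Relation.ReflTransGen N.ustep

/-- A semidirected cycle. -/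
def IsSDCycle (N : Net n) (p : List (ℕ × Bool)) : Prop :=
  ∃ u, p ≠ [] ∧ N.chain u p u ∧ (p.map N.dst).Nodup ∧ (p.map Prod.fst).Nodup

def Acyclic (N : Net n) : Prop := ∀ p, ¬ N.IsSDCycle p

/-- `x` is the leaf labelled `a`. -/
def HasLeaf (N : Net n) (a : Fin n) (x : ℕ) : Prop := x ∈ N.V ∧ N.lbl x = some a

/-- `N` is an `L`-network: a semidirected acyclic graph whose leaves are tree
nodes, with leaves injectively labelled. -/
structure IsLNetwork (N : Net n) : Prop where
  wfT : ∀ e ∈ N.E, N.tail e ∈ N.V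
  wfH : ∀ e ∈ N.E, N.head e ∈ N.V
  acyclic : N.Acyclic
  leavesTree : ∀ v, N.IsLeafNode v → N.IsTreeNode v
  lblV : ∀ v, v ∉ N.V → N.lbl v = none
  lblLeaf : ∀ v ∈ N.V, ((N.lbl v).isSome ↔ N.IsLeafNode v)
  lblInj : ∀ v ∈ N.V, ∀ w ∈ N.V, N.lbl v ≠ none → N.lbl v = N.lbl w → v = w

/-- Binary: roots of degree 0, 2 or 3; leaves of degree 0 or 1; other nodes of degree 3. -/
def IsBinary (N : Net n) : Prop :=
  ∀ v ∈ N.V,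
    (N.IsRootNode v → N.deg v = 0 ∨ N.deg v = 2 ∨ N.deg v = 3) ∧
    (N.IsLeafNode v → N.deg v = 0 ∨ N.deg v = 1) ∧
    (¬ N.IsRootNode v → ¬ N.IsLeafNode v → N.deg v = 3)

/-- The class of `v` under `~` is a singleton. -/
def TrivialClass (N : Net n) (v : ℕ) : Prop := ∀ w, N.UndirConn v w → w = v

/-- Complete: edges incident to leaves are directed (toward the leaves), and every
nontrivial class under `~` has in-degree 0 in the contraction `N/~`. -/
def IsComplete (N : Net n) : Prop :=
  (∀ e ∈ N.E, N.dir e = false → ¬ N.IsLeafNode (N.tail e) ∧ ¬ N.IsLeafNode (N.head e)) ∧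
  (∀ v ∈ N.V, ¬ N.TrivialClass v → ∀ e ∈ N.E, N.dir e = true → ¬ N.UndirConn (N.head e) v)

/-- The class `[v]` is a root of the contraction `N/~`: no directed edge points into it. -/
def IsRootClass (N : Net n) (v : ℕ) : Prop :=
  v ∈ N.V ∧ ∀ e ∈ N.E, N.dir e = true → ¬ N.UndirConn (N.head e) v

/-- `v` belongs to an unresolved root component. -/
def UnresolvedRC (N : Net n) (v : ℕ) : Prop :=
  N.IsRootClass v ∧ (¬ N.TrivialClass v ∨ N.deg v = 3)

/-- `e` belongs to the admissible edge set of the root component of `v0`. -/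
def AdmFor (N : Net n) (v0 e : ℕ) : Prop := e ∈ N.E ∧ N.UndirConn (N.tail e) v0

/-! ## μ-representation of a network -/

def Hybs (N : Net n) : Finset ℕ := N.V.filter (fun v => N.IsHybrid v)

def mToLbl (N : Net n) (v : ℕ) (a : Fin n) : ℕ :=
  ∑ x ∈ N.V.filter (fun x => N.lbl x = some a), N.m v x
def mToLblAvoid (N : Net n) (v : ℕ) (a : Fin n) (e : ℕ) : ℕ :=
  ∑ x ∈ N.V.filter (fun x => N.lbl x = some a), N.mAvoid v x e

/-- Numbers of paths from `v` to hybrids (coordinate 0) and to each leaf. -/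
def muFrom (N : Net n) (v : ℕ) : MuVec n :=
  fun i => Fin.cases (∑ h ∈ N.Hybs, N.m v h) (fun a => N.mToLbl v a) i

/-- Numbers of paths from `v` avoiding edge `e`. -/
def muAt (N : Net n) (e : ℕ) (v : ℕ) : MuVec n :=
  fun i => Fin.cases (∑ h ∈ N.Hybs, N.mAvoid v h e) (fun a => N.mToLblAvoid v a e) i

/-- The μ-entry of an edge. -/
def muEntryEdge (N : Net n) (e : ℕ) : MuEntry n :=
  if N.dir e = true then
    let t : Tag := if N.IsHybrid (N.head e) then Tag.hy else Tag.te
    if N.UnresolvedRC (N.tail e) then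
      ({(N.muAt e (N.head e), t),
        (fun i => N.muFrom (N.tail e) i - N.muAt e (N.tail e) i, Tag.ie)} : MuEntry n)
    else ({(N.muAt e (N.head e), t)} : MuEntry n)
  else
    ({(N.muAt e (N.head e), Tag.te), (N.muAt e (N.tail e), Tag.te)} : MuEntry n)

/-- One μ-entry per root component (indexed by the minimal representative). -/
def rootEntries (N : Net n) : MuRep n :=
  ((N.V.filter (fun v => N.IsRootClass v ∧ ∀ w ∈ N.V, N.UndirConn v w → v ≤ w)).val).map
    (fun v => ({(N.muFrom v, Tag.rn)} : MuEntry n))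

/-- The edge-based μ-representation of `N`. -/
def muRep (N : Net n) : MuRep n :=
  N.E.val.map (fun e => N.muEntryEdge e) + N.rootEntries

end Net

/-! ## Operations on μ-representations -/

variable {n : ℕ}

/-- Multiplicity of a simple μ-vector in a μ-representation: the number of
entries (with multiplicity) containing it. -/
def multVec (μs : MuRep n) (m : MuVec n) : ℕ :=
  μs.countP (fun ent => ∃ t, (m, t) ∈ ent)

def hasTagged (μs : MuRep n) (mt : MuVec n × Tag) : Prop := ∃ ent ∈ μs, mt ∈ ent

/-- The entry of a simple μ-vector (meaningful when its multiplicity is 1). -/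
def entryOf (μs : MuRep n) (m : MuVec n) : MuEntry n :=
  if h : ∃ ent ∈ μs, ∃ t, (m, t) ∈ ent then h.choose else 0

/-- The tag of a simple μ-vector (meaningful when its multiplicity is 1). -/
def tagOf (μs : MuRep n) (m : MuVec n) : Tag :=
  if hasTagged μs (m, Tag.rn) then Tag.rn
  else if hasTagged μs (m, Tag.ie) then Tag.ie
  else if hasTagged μs (m, Tag.te) then Tag.te
  else Tag.hy

/-- The tagged μ-vectors other than `m` in the entry of `m`. -/
def invParts (μs : MuRep n) (m : MuVec n) : MuEntry n :=
  (entryOf μs m).filter (fun mt => mt.1 ≠ m)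

def hasInv (μs : MuRep n) (m : MuVec n) : Prop := invParts μs m ≠ 0

/-- The inverse `m⁻¹` of `m` (meaningful when it exists). -/
def invVec (μs : MuRep n) (m : MuVec n) : MuVec n := ((invParts μs m).toList.headI).1

/-- `(a,b)` is a tree cherry of the μ-representation. -/
def MuTreeCherry (μs : MuRep n) (a b : Fin n) : Prop :=
  multVec μs (dlt ({a.succ, b.succ} : Finset (Fin (n + 1)))) = 1

/-- Type of a tree cherry of a μ-representation. -/
def muTreeType (μs : MuRep n) (a b : Fin n) : CT :=
  let mab := dlt ({a.succ, b.succ} : Finset (Fin (n + 1)))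
  match tagOf μs mab with
  | Tag.rn => CT.r2
  | Tag.ie => CT.r3
  | Tag.te =>
      if (¬ hasInv μs mab) ∨ (∃ mt ∈ invParts μs mab, mt.2 = Tag.ie) then CT.d else CT.u
  | Tag.hy => CT.u

/-- `(a,b)` is a reticulate cherry of the μ-representation. -/
def MuRetCherry (μs : MuRep n) (a b : Fin n) : Prop :=
  multVec μs (dlt ({0, a.succ} : Finset (Fin (n + 1)))) = 2 ∧
    (multVec μs (dlt ({0, a.succ, b.succ} : Finset (Fin (n + 1)))) = 1 ∨
      (multVec μs (dlt ({0, a.succ, b.succ} : Finset (Fin (n + 1)))) = 2 ∧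
        ∀ ent ∈ μs, ∀ t : Tag,
          (dlt ({0, a.succ, b.succ} : Finset (Fin (n + 1))), t) ∈ ent → t = Tag.ie))

/-- Type of a reticulate cherry of a μ-representation. -/
def muRetType (μs : MuRep n) (a b : Fin n) : CT :=
  let mab := dlt ({0, a.succ, b.succ} : Finset (Fin (n + 1)))
  if multVec μs mab = 2 then CT.r3
  else
    match tagOf μs mab with
    | Tag.rn => CT.r2
    | Tag.ie => CT.r3
    | Tag.te =>
        if (¬ hasInv μs mab) ∨ (∃ mt ∈ invParts μs mab, mt.2 = Tag.ie) then CT.d else CT.u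
    | Tag.hy => CT.u

/-- `δ_{0,a,b}⁻¹`, defined as `δ_{0,a}` in the multiplicity-2 (parallel) case. -/
def retInv (μs : MuRep n) (a b : Fin n) : MuVec n :=
  if multVec μs (dlt ({0, a.succ, b.succ} : Finset (Fin (n + 1)))) = 2 then
    dlt ({0, a.succ} : Finset (Fin (n + 1)))
  else invVec μs (dlt ({0, a.succ, b.succ} : Finset (Fin (n + 1))))

/-- The internal μ-entry of a reticulate cherry `(a,b)` with respect to `μs`. -/
def internalEntry (μs : MuRep n) (a b : Fin n) : MuEntry n :=
  let d0a := dlt ({0, a.succ} : Finset (Fin (n + 1)))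
  let d0ab := dlt ({0, a.succ, b.succ} : Finset (Fin (n + 1)))
  if multVec μs d0ab = 1 ∧
      ((¬ hasInv μs d0ab) ∨ (∃ mt ∈ invParts μs d0ab, mt.2 = Tag.ie)) then
    ({(d0a, Tag.hy)} : MuEntry n)
  else
    ({(d0a, Tag.hy), (fun i => d0ab i + retInv μs a b i - d0a i, Tag.ie)} : MuEntry n)

/-- Remove the whole entry of `m`. -/
def removeEntryOf (μs : MuRep n) (m : MuVec n) : MuRep n := μs.erase (entryOf μs m)

/-- Remove `m⁻¹` from the entry of `m` (keeping `m`). -/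
def removeInvOf (μs : MuRep n) (m : MuVec n) : MuRep n :=
  (μs.erase (entryOf μs m)) + {(entryOf μs m).filter (fun mt => mt.1 = m)}

/-- Remove `m` from its entry (keeping the rest of the entry). -/
def removeVecOf (μs : MuRep n) (m : MuVec n) : MuRep n :=
  (μs.erase (entryOf μs m)) + {(entryOf μs m).filter (fun mt => mt.1 ≠ m)}

def entryOfT (μs : MuRep n) (mt : MuVec n × Tag) : MuEntry n :=
  if h : ∃ ent ∈ μs, mt ∈ ent then h.choose else 0

/-- Remove one occurrence of the tagged μ-vector `mt` from some entry containing it. -/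
def removeTaggedOnce (μs : MuRep n) (mt : MuVec n × Tag) : MuRep n :=
  (μs.erase (entryOfT μs mt)) + {(entryOfT μs mt).erase mt}

/-- Change the tag of `m⁻¹` (within the entry of `m`) to `ie`. -/
def retagInvIe (μs : MuRep n) (m : MuVec n) : MuRep n :=
  let ent := entryOf μs m
  (μs.erase ent) +
    {ent.filter (fun mt => mt.1 = m) + (invParts μs m).map (fun mt => (mt.1, Tag.ie))}

/-- Change the tag of one occurrence of the tagged μ-vector `mt` to `t'`. -/
def retagTaggedTo (μs : MuRep n) (mt : MuVec n × Tag) (t' : Tag) : MuRep n :=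
  let ent := entryOfT μs mt
  (μs.erase ent) + {(ent.erase mt) + ({(mt.1, t')} : MuEntry n)}

/-- Apply `f` to every simple μ-vector of every entry. -/
def mapVecs (f : MuVec n → MuVec n) (μs : MuRep n) : MuRep n :=
  μs.map (fun ent => ent.map (fun mt => (f mt.1, mt.2)))

/-- `(m_0, m_a, m_b, …) ↦ (m_0, 0, m_b, …)`. -/
def zeroCoordA (a : Fin n) (m : MuVec n) : MuVec n :=
  fun i => if i = a.succ then 0 else m i

/-- `(m_0, m_a, m_b, …) ↦ (m_0 − m_a, m_a − m_b, m_b, …)`. -/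
def retAdj (a b : Fin n) (m : MuVec n) : MuVec n :=
  fun i => if i = 0 then m 0 - m a.succ else if i = a.succ then m a.succ - m b.succ else m i

/-- Reduction of a tree cherry `(a,b)` on a μ-representation. -/
def muReduceTree (μs : MuRep n) (a b : Fin n) : MuRep n :=
  let dab := dlt ({a.succ, b.succ} : Finset (Fin (n + 1)))
  let da := dlt ({a.succ} : Finset (Fin (n + 1)))
  let db := dlt ({b.succ} : Finset (Fin (n + 1)))
  let μ1 :=
    match muTreeType μs a b with
    | CT.r2 => removeEntryOf μs db
    | CT.d => removeEntryOf μs db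
    | CT.r3 => removeVecOf (removeInvOf μs db) dab
    | CT.u => retagInvIe (removeEntryOf μs db) dab
  let μ2 := removeEntryOf μ1 da
  mapVecs (zeroCoordA a) μ2

/-- Reduction of a reticulate cherry `(a,b)` on a μ-representation. -/
def muReduceRet (μs : MuRep n) (a b : Fin n) : MuRep n :=
  let d0a := dlt ({0, a.succ} : Finset (Fin (n + 1)))
  let d0ab := dlt ({0, a.succ, b.succ} : Finset (Fin (n + 1)))
  let da := dlt ({a.succ} : Finset (Fin (n + 1)))
  let db := dlt ({b.succ} : Finset (Fin (n + 1)))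
  let intEnt := internalEntry μs a b
  let μ1 :=
    match muRetType μs a b with
    | CT.r2 => removeEntryOf μs db
    | CT.d => removeEntryOf μs db
    | CT.r3 => removeTaggedOnce (removeInvOf μs db) (d0ab, Tag.ie)
    | CT.u => retagInvIe (removeEntryOf μs db) d0ab
  let μ2 := removeEntryOf μ1 da
  let μ3 := μ2.erase intEnt
  let μ4 := retagTaggedTo μ3 (d0a, Tag.hy) Tag.te
  mapVecs (retAdj a b) μ4

/-- Reduction of a cherry `(a,b)` on a μ-representation. -/
def muReduceCherry (μs : MuRep n) (a b : Fin n) : MuRep n :=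
  if MuTreeCherry μs a b then muReduceTree μs a b
  else if MuRetCherry μs a b then muReduceRet μs a b
  else μs

/-! ## Cherries and reductions on networks -/

namespace Net

/-- The node labelled `a` (meaningful when it exists). -/
def labelNode (N : Net n) (a : Fin n) : ℕ :=
  ((N.V.filter (fun x => N.lbl x = some a)).sort (· ≤ ·)).headI

def inEdges (N : Net n) (x : ℕ) : Finset ℕ :=
  N.E.filter (fun e => N.dir e = true ∧ N.head e = x)

/-- The parent of `x` (meaningful when `x` has in-degree 1). -/
def parentOf (N : Net n) (x : ℕ) : ℕ :=
  N.tail (((N.inEdges x).sort (· ≤ ·)).headI)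

def IsParentOf (N : Net n) (p x : ℕ) : Prop :=
  ∃ e ∈ N.E, N.dir e = true ∧ N.tail e = p ∧ N.head e = x

/-- `(a,b)` is a tree cherry of `N`. -/
def TreeCherry (N : Net n) (a b : Fin n) : Prop :=
  ∃ x y p, N.HasLeaf a x ∧ N.HasLeaf b y ∧ x ≠ y ∧ N.IsParentOf p x ∧ N.IsParentOf p y

/-- `(a,b)` is a reticulate cherry of `N`. -/
def RetCherry (N : Net n) (a b : Fin n) : Prop :=
  ∃ x y pa pb, N.HasLeaf a x ∧ N.HasLeaf b y ∧ x ≠ y ∧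
    N.IsParentOf pa x ∧ N.IsHybrid pa ∧ N.IsParentOf pb y ∧ N.IsParentOf pb pa

def IsCherry (N : Net n) (a b : Fin n) : Prop := N.TreeCherry a b ∨ N.RetCherry a b

/-- The type of a cherry `(a,b)`, read off from the parent of `b`. -/
def cherryType (N : Net n) (a b : Fin n) : CT :=
  let pb := N.parentOf (N.labelNode b)
  if N.IsRootNode pb ∧ N.deg pb = 2 then CT.r2
  else if N.IsRootNode pb ∧ N.deg pb = 3 then CT.r3
  else if 0 < N.undeg pb then CT.u
  else CT.d

def incE (N : Net n) (v : ℕ) : Finset ℕ :=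
  N.E.filter (fun e => N.tail e = v ∨ N.head e = v)

/-- A node is suppressible (Def. of node suppression). -/
def Suppressible (N : Net n) (v : ℕ) : Prop :=
  N.lbl v = none ∧
    ((N.deg v = 2 ∧ ¬ N.IsRootNode v) ∨
      (N.deg v = 1 ∧ N.IsRootNode v ∧ ∀ e ∈ N.incE v, ¬ N.IsHybrid (N.head e)))

/-- Replace the two edges `e1`, `e2` at `v` by the single edge (named `e1`)
from `p` to `c`, directed iff `d`. -/
def replaceEdge (N : Net n) (v e1 e2 p c : ℕ) (d : Bool) : Net n :=
  { V := N.V.erase v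
    E := N.E.erase e2
    tail := Function.update N.tail e1 p
    head := Function.update N.head e1 c
    dir := Function.update N.dir e1 d
    lbl := N.lbl }

/-- Suppress a (suppressible) node of degree 1 or 2. -/
def suppress (N : Net n) (v : ℕ) : Net n :=
  match (N.incE v).sort (· ≤ ·) with
  | [e] => { N with V := N.V.erase v, E := N.E.erase e }
  | [e1, e2] =>
      let o1 := if N.tail e1 = v then N.head e1 else N.tail e1
      let o2 := if N.tail e2 = v then N.head e2 else N.tail e2
      if N.dir e1 = true ∧ N.tail e1 = v then N.replaceEdge v e1 e2 o2 o1 true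
      else if N.dir e2 = true ∧ N.tail e2 = v then N.replaceEdge v e1 e2 o1 o2 true
      else if N.dir e1 = true then N.replaceEdge v e1 e2 o1 o2 true
      else if N.dir e2 = true then N.replaceEdge v e1 e2 o2 o1 true
      else N.replaceEdge v e1 e2 o1 o2 false
  | _ => N

def suppressIf (N : Net n) (v : ℕ) : Net n := if N.Suppressible v then N.suppress v else N

/-- Delete the leaf `x` and its incident edge(s). -/
def deleteLeaf (N : Net n) (x : ℕ) : Net n :=
  { V := N.V.erase x
    E := N.E \ N.incE x
    tail := N.tail
    head := N.head
    dir := N.dir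
    lbl := Function.update N.lbl x none }

/-- Reduction of a tree cherry `(a,b)`. -/
def reduceTree (N : Net n) (a b : Fin n) : Net n :=
  let x := N.labelNode a
  let p := N.parentOf x
  (N.deleteLeaf x).suppressIf p

/-- Reduction of a reticulate cherry `(a,b)`: delete the internal hybrid edge,
suppress `p_b` if suppressible, then suppress `p_a`. -/
def reduceRet (N : Net n) (a b : Fin n) : Net n :=
  let x := N.labelNode a
  let y := N.labelNode b
  let pa := N.parentOf x
  let pb := N.parentOf y
  let eint :=
    ((N.E.filter (fun e => N.dir e = true ∧ N.tail e = pb ∧ N.head e = pa)).sort (· ≤ ·)).headI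
  let N1 : Net n := { N with E := N.E.erase eint }
  ((N1.suppressIf pb).suppress pa)

/-- Reduction of the cherry `(a,b)` in `N`, written `N^{(a,b)}`. -/
def reduceCherry (N : Net n) (a b : Fin n) : Net n :=
  if N.TreeCherry a b then N.reduceTree a b
  else if N.RetCherry a b then N.reduceRet a b
  else N

def reduceSeq (N : Net n) (S : List (Fin n × Fin n)) : Net n :=
  S.foldl (fun M s => M.reduceCherry s.1 s.2) N

def IsRedSeq : Net n → List (Fin n × Fin n) → Prop
  | _, [] => True
  | N, s :: S => N.IsCherry s.1 s.2 ∧ IsRedSeq (N.reduceCherry s.1 s.2) S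

/-- `N` is the trivial forest on `L0`: isolated nodes labelled bijectively by `L0`. -/
def IsTrivialForest (N : Net n) (L0 : Finset (Fin n)) : Prop :=
  N.E = ∅ ∧ (∀ v ∈ N.V, ∃ a ∈ L0, N.lbl v = some a) ∧
    (∀ a ∈ L0, ∃ v ∈ N.V, N.lbl v = some a)

/-- `N` is orchard: some cherry reduction sequence reduces it to a trivial forest. -/
def Orchard (N : Net n) : Prop :=
  ∃ S L0, N.IsRedSeq S ∧ (N.reduceSeq S).IsTrivialForest L0

def freshV (N : Net n) : ℕ := N.V.sup id + 1
def freshE (N : Net n) : ℕ := N.E.sup id + 1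

/-- Addition of the cherry `(a,b)` of kind `k` to `N` (identity if conditions fail). -/
def addCherry (N : Net n) (a b : Fin n) (k : CherryKind) : Net n :=
  let y := N.labelNode b
  let w := N.parentOf y
  let ewb := ((N.inEdges y).sort (· ≤ ·)).headI
  let va := N.freshV
  let vpb := N.freshV + 1
  let e1 := N.freshE
  let e2 := N.freshE + 1
  let x := N.labelNode a
  let pa := N.parentOf x
  let isolated : Prop := y ∈ N.V ∧ N.deg y = 0 ∧ (N.lbl y).isSome
  let nonIsolated : Prop := y ∈ N.V ∧ N.deg y ≠ 0 ∧ (N.lbl y).isSome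
  let resolvedRoot : Prop := N.IsRootNode w ∧ N.deg w = 2
  let aLeaf : Prop := ∃ xx, N.HasLeaf a xx
  match k with
  | CherryKind.Tr2 =>
      if isolated then
        { V := insert vpb (insert va N.V)
          E := insert e2 (insert e1 N.E)
          tail := Function.update (Function.update N.tail e1 vpb) e2 vpb
          head := Function.update (Function.update N.head e1 va) e2 y
          dir := Function.update (Function.update N.dir e1 true) e2 true
          lbl := Function.update N.lbl va (some a) }
      else N
  | CherryKind.Tr3 =>
      if nonIsolated ∧ resolvedRoot then
        { V := insert va N.V
          E := insert e1 N.E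
          tail := Function.update N.tail e1 w
          head := Function.update N.head e1 va
          dir := Function.update N.dir e1 true
          lbl := Function.update N.lbl va (some a) }
      else N
  | CherryKind.Td =>
      if nonIsolated ∧ ¬ resolvedRoot then
        { V := insert vpb (insert va N.V)
          E := insert e2 (insert e1 N.E)
          tail := Function.update (Function.update N.tail e1 vpb) e2 vpb
          head :=
            Function.update (Function.update (Function.update N.head ewb vpb) e1 va) e2 y
          dir := Function.update (Function.update N.dir e1 true) e2 true
          lbl := Function.update N.lbl va (some a) }
      else N
  | CherryKind.Tu =>
      if nonIsolated ∧ ¬ resolvedRoot then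
        { V := insert vpb (insert va N.V)
          E := insert e2 (insert e1 N.E)
          tail := Function.update (Function.update N.tail e1 vpb) e2 vpb
          head :=
            Function.update (Function.update (Function.update N.head ewb vpb) e1 va) e2 y
          dir :=
            Function.update (Function.update (Function.update N.dir ewb false) e1 true) e2 true
          lbl := Function.update N.lbl va (some a) }
      else N
  | CherryKind.Rr2 =>
      if aLeaf ∧ isolated then
        { V := insert vpb N.V
          E := insert e2 (insert e1 N.E)
          tail := Function.update (Function.update N.tail e1 vpb) e2 vpb
          head := Function.update (Function.update N.head e1 pa) e2 y
          dir := Function.update (Function.update N.dir e1 true) e2 true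
          lbl := N.lbl }
      else N
  | CherryKind.Rr3 =>
      if aLeaf ∧ nonIsolated ∧ resolvedRoot then
        { V := N.V
          E := insert e1 N.E
          tail := Function.update N.tail e1 w
          head := Function.update N.head e1 pa
          dir := Function.update N.dir e1 true
          lbl := N.lbl }
      else N
  | CherryKind.Rd =>
      if aLeaf ∧ nonIsolated ∧ ¬ resolvedRoot then
        { V := insert vpb N.V
          E := insert e2 (insert e1 N.E)
          tail := Function.update (Function.update N.tail e1 vpb) e2 vpb
          head :=
            Function.update (Function.update (Function.update N.head ewb vpb) e1 pa) e2 y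
          dir := Function.update (Function.update N.dir e1 true) e2 true
          lbl := N.lbl }
      else N
  | CherryKind.Ru =>
      if aLeaf ∧ nonIsolated ∧ ¬ resolvedRoot then
        { V := insert vpb N.V
          E := insert e2 (insert e1 N.E)
          tail := Function.update (Function.update N.tail e1 vpb) e2 vpb
          head :=
            Function.update (Function.update (Function.update N.head ewb vpb) e1 pa) e2 y
          dir :=
            Function.update (Function.update (Function.update N.dir ewb false) e1 true) e2 true
          lbl := N.lbl }
      else N

/-- Isomorphism of leaf-labelled semidirected networks. -/
def Isom (N M : Net n) : Prop :=
  ∃ f g : ℕ → ℕ,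
    Set.InjOn f ↑N.V ∧ N.V.image f = M.V ∧
    Set.InjOn g ↑N.E ∧ N.E.image g = M.E ∧
    (∀ e ∈ N.E, M.dir (g e) = N.dir e) ∧
    (∀ e ∈ N.E, N.dir e = true →
      M.tail (g e) = f (N.tail e) ∧ M.head (g e) = f (N.head e)) ∧
    (∀ e ∈ N.E, N.dir e = false →
      (M.tail (g e) = f (N.tail e) ∧ M.head (g e) = f (N.head e)) ∨
        (M.tail (g e) = f (N.head e) ∧ M.head (g e) = f (N.tail e))) ∧
    (∀ v ∈ N.V, M.lbl (f v) = N.lbl v)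

/-- `N` is a (complete binary) `L`-network. -/
def Good (N : Net n) : Prop := N.IsLNetwork ∧ N.IsBinary ∧ N.IsComplete

/-- The edge-based μ-dissimilarity: size of the symmetric difference of the
multisets of μ-entries. -/
def dmu (N M : Net n) : ℕ := ((N.muRep - M.muRep) + (M.muRep - N.muRep)).card

/-- `(a,b)` is a reticulate cherry of `N` whose internal and external hybrid
edges are parallel. -/
def ParallelRet (N : Net n) (a b : Fin n) : Prop :=
  ∃ x y pa pb hi he, N.HasLeaf a x ∧ N.HasLeaf b y ∧
    N.IsParentOf pa x ∧ N.IsHybrid pa ∧ N.IsParentOf pb y ∧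
    hi ≠ he ∧ hi ∈ N.E ∧ he ∈ N.E ∧ N.dir hi = true ∧ N.dir he = true ∧
    N.tail hi = pb ∧ N.head hi = pa ∧ N.tail he = pb ∧ N.head he = pa

end Net


/-! Every cycle of undirected edges is a semidirected cycle, so acyclicity of `N` makes its
undirected edges a simple forest (no loops, no parallel edges, no cycles). In a forest two
vertices in the same component are joined by exactly one path, and undirected paths of `N`
correspond to paths of that forest because no two undirected edges share their endpoints.
The directed part is immediate: a directed edge with head in `[v0]` would enter the root
component. -/

namespace Net

variable {N : Net n}

lemma tail_ne_head_of_acyclic (hA : N.Acyclic) {e : ℕ} (he : e ∈ N.E) :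
    N.tail e ≠ N.head e := by
  intro h
  have hloop : N.chain (N.tail e) [(e, true)] (N.tail e) :=
    ⟨⟨he, fun _ => rfl, by simp [src]⟩, by simp [chain, dst, h]⟩
  exact hA _ ⟨N.tail e, by simp, hloop, by simp, by simp⟩

/-- Two undirected edges with the same endpoints form a semidirected 2-cycle. -/
lemma eq_of_sym2_eq_of_acyclic (hA : N.Acyclic) {e₁ e₂ : ℕ} (h₁ : e₁ ∈ N.E) (h₂ : e₂ ∈ N.E)
    (hd₁ : N.dir e₁ = false) (hd₂ : N.dir e₂ = false)
    (h : s(N.tail e₁, N.head e₁) = s(N.tail e₂, N.head e₂)) : e₁ = e₂ := by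
  by_contra hne
  have hloop := tail_ne_head_of_acyclic hA h₁
  rcases Sym2.eq_iff.mp h with ⟨ht, hh⟩ | ⟨ht, hh⟩
  · refine hA [(e₁, true), (e₂, false)] ⟨N.tail e₁, by simp, ?_, ?_, by simp [hne]⟩
    · exact ⟨⟨h₁, by simp [hd₁], by simp [src]⟩,
        ⟨h₂, by simp [hd₂], by simpa [src, dst] using hh.symm⟩, by simpa [chain, dst] using ht.symm⟩
    · simpa [dst, ← ht] using hloop.symm
  · refine hA [(e₁, true), (e₂, true)] ⟨N.tail e₁, by simp, ?_, ?_, by simp [hne]⟩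
    · exact ⟨⟨h₁, by simp [hd₁], by simp [src]⟩,
        ⟨h₂, by simp [hd₂], by simpa [src, dst] using hh.symm⟩, by simpa [chain, dst] using ht.symm⟩
    · simpa [dst, ← ht] using hloop.symm

lemma ustep_iff {u v : ℕ} :
    N.ustep u v ↔ ∃ e ∈ N.E, N.dir e = false ∧ s(N.tail e, N.head e) = s(u, v) := by
  simp only [ustep, Sym2.eq_iff, eq_comm (a := N.tail _), eq_comm (a := N.head _)]

lemma ustep_comm {u v : ℕ} : N.ustep u v ↔ N.ustep v u := by
  simp only [ustep_iff, Sym2.eq_swap]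

lemma stepOK.sym2_eq {u : ℕ} {s : ℕ × Bool} (h : N.stepOK u s) :
    s(N.tail s.1, N.head s.1) = s(u, N.dst s) := by
  obtain ⟨-, -, rfl⟩ := h
  obtain ⟨e, _ | _⟩ := s <;> simp [src, dst, Sym2.eq_swap]

lemma stepOK.ustep {u : ℕ} {s : ℕ × Bool} (h : N.stepOK u s) (hd : N.dir s.1 = false) :
    N.ustep u (N.dst s) :=
  ustep_iff.mpr ⟨s.1, h.1, hd, h.sym2_eq⟩

lemma ustep.exists_stepOK {u v : ℕ} (h : N.ustep u v) :
    ∃ s, N.stepOK u s ∧ N.dir s.1 = false ∧ N.dst s = v := by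
  obtain ⟨e, he, hd, ⟨rfl, rfl⟩ | ⟨rfl, rfl⟩⟩ := h
  · exact ⟨(e, true), ⟨he, fun _ => rfl, rfl⟩, hd, rfl⟩
  · exact ⟨(e, false), ⟨he, by simp [hd], rfl⟩, hd, rfl⟩

lemma stepOK.eq_of_dst_eq (hA : N.Acyclic) {u : ℕ} {s t : ℕ × Bool} (hs : N.stepOK u s)
    (ht : N.stepOK u t) (hds : N.dir s.1 = false) (hdt : N.dir t.1 = false)
    (h : N.dst s = N.dst t) : s = t := by
  have he : s.1 = t.1 :=
    eq_of_sym2_eq_of_acyclic hA hs.1 ht.1 hds hdt (by rw [hs.sym2_eq, ht.sym2_eq, h])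
  have hloop := tail_ne_head_of_acyclic hA ht.1
  have hsrc : N.src s = N.src t := hs.2.2.trans ht.2.2.symm
  obtain ⟨e, b⟩ := s
  obtain ⟨e', b'⟩ := t
  simp only at he
  subst he
  cases b <;> cases b' <;> simp_all [src]

def undirGraph (N : Net n) : SimpleGraph ℕ := SimpleGraph.fromRel N.ustep

lemma undirGraph_adj_iff (hA : N.Acyclic) {u v : ℕ} : N.undirGraph.Adj u v ↔ N.ustep u v := by
  refine ⟨fun h => ((SimpleGraph.fromRel_adj _ _ _).mp h).2.elim id ustep_comm.mp, fun h => ?_⟩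
  refine (SimpleGraph.fromRel_adj _ _ _).mpr ⟨?_, Or.inl h⟩
  obtain ⟨e, he, -, h'⟩ := ustep_iff.mp h
  rintro rfl
  obtain ⟨ht, hh⟩ : N.tail e = u ∧ N.head e = u := by simpa using h'
  exact tail_ne_head_of_acyclic hA he (ht.trans hh.symm)

lemma UndirConn.reachable (hA : N.Acyclic) {u v : ℕ} (h : N.UndirConn u v) :
    N.undirGraph.Reachable u v :=
  (SimpleGraph.reachable_iff_reflTransGen u v).mpr
    (Relation.ReflTransGen.mono (fun _ _ => (undirGraph_adj_iff hA).mpr) _ _ h)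

lemma UndirConn.mem_V (hwT : ∀ e ∈ N.E, N.tail e ∈ N.V) (hwH : ∀ e ∈ N.E, N.head e ∈ N.V)
    {u v : ℕ} (hu : u ∈ N.V) (h : N.UndirConn u v) : v ∈ N.V := by
  induction h with
  | refl => exact hu
  | tail _ hstep =>
    obtain ⟨e, he, -, ⟨-, rfl⟩ | ⟨rfl, -⟩⟩ := hstep
    exacts [hwH e he, hwT e he]

lemma exists_chain_of_walk (hA : N.Acyclic) {u v : ℕ} (W : N.undirGraph.Walk u v) :
    ∃ p : List (ℕ × Bool), N.chain u p v ∧ (∀ s ∈ p, N.dir s.1 = false) ∧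
      p.map N.dst = W.support.tail ∧
      p.map (fun s => s(N.tail s.1, N.head s.1)) = W.edges := by
  induction W with
  | nil => exact ⟨[], rfl, by simp, by simp, by simp⟩
  | @cons u v w hadj W ih =>
    obtain ⟨p, hch, hund, hdst, hedges⟩ := ih
    obtain ⟨s, hs, hd, rfl⟩ := ((undirGraph_adj_iff hA).mp hadj).exists_stepOK
    refine ⟨s :: p, ⟨hs, hch⟩, ?_, ?_, ?_⟩
    · simpa [hd] using hund
    · simp [hdst, W.cons_tail_support]
    · simp [hedges, hs.sym2_eq]

lemma exists_walk_of_chain (hA : N.Acyclic) {p : List (ℕ × Bool)} {u v : ℕ}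
    (hch : N.chain u p v) (hund : ∀ s ∈ p, N.dir s.1 = false) :
    ∃ W : N.undirGraph.Walk u v, W.support = u :: p.map N.dst := by
  induction p generalizing u with
  | nil => cases hch; exact ⟨.nil, rfl⟩
  | cons s p ih =>
    obtain ⟨hs, hch⟩ := hch
    obtain ⟨W, hW⟩ := ih hch fun t ht => hund t (List.mem_cons_of_mem _ ht)
    have hadj := (undirGraph_adj_iff hA).mpr (hs.ustep (hund s List.mem_cons_self))
    exact ⟨.cons hadj W, by simp [hW]⟩

lemma eq_of_chain_of_map_dst_eq (hA : N.Acyclic) {p q : List (ℕ × Bool)} {u v w : ℕ}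
    (hp : N.chain u p v) (hq : N.chain u q w) (hpu : ∀ s ∈ p, N.dir s.1 = false)
    (hqu : ∀ s ∈ q, N.dir s.1 = false) (h : p.map N.dst = q.map N.dst) : p = q := by
  induction p generalizing q u with
  | nil => exact (List.map_eq_nil_iff.mp h.symm).symm
  | cons s p ih =>
    obtain _ | ⟨t, q⟩ := q
    · simp at h
    obtain ⟨hs, hp⟩ := hp
    obtain ⟨ht, hq⟩ := hq
    obtain ⟨hdst, htail⟩ := List.cons_eq_cons.mp h
    obtain rfl := hs.eq_of_dst_eq hA ht (hpu s List.mem_cons_self) (hqu t List.mem_cons_self) hdst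
    rw [ih hp hq (fun x hx => hpu x (List.mem_cons_of_mem _ hx))
      (fun x hx => hqu x (List.mem_cons_of_mem _ hx)) htail]

lemma undirGraph_isAcyclic (hA : N.Acyclic) : N.undirGraph.IsAcyclic := by
  intro u c hc
  obtain ⟨p, hch, -, hdst, hedges⟩ := exists_chain_of_walk hA c
  refine hA p ⟨u, ?_, hch, hdst ▸ hc.support_nodup, ?_⟩
  · rintro rfl
    have := hc.three_le_length
    rw [← c.length_edges, ← hedges] at this
    simp at this
  · refine List.Nodup.of_map (fun e => s(N.tail e, N.head e)) ?_
    rw [List.map_map]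
    exact hedges ▸ hc.edges_nodup

lemma existsUnique_undirected_isPath (hA : N.Acyclic) {u w : ℕ} (hu : u ∈ N.V)
    (hr : N.undirGraph.Reachable u w) :
    ∃! p : List (ℕ × Bool), N.IsPath u w p ∧ ∀ s ∈ p, N.dir s.1 = false := by
  obtain ⟨P, hP⟩ := hr.exists_isPath
  obtain ⟨p, hch, hund, hdst, -⟩ := exists_chain_of_walk hA P
  have hsupp : P.support = u :: p.map N.dst := by rw [hdst, P.cons_tail_support]
  refine ⟨p, ⟨⟨hu, hch, hsupp ▸ hP.support_nodup⟩, hund⟩, ?_⟩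
  rintro q ⟨⟨-, hqch, hqnd⟩, hqund⟩
  obtain ⟨Q, hQ⟩ := exists_walk_of_chain hA hqch hqund
  have hQP : (⟨Q, .mk' (hQ ▸ hqnd)⟩ : N.undirGraph.Path u w) = ⟨P, hP⟩ :=
    ((undirGraph_isAcyclic hA).subsingleton_path u w).elim _ _
  have hsupp' := congrArg (fun R : N.undirGraph.Path u w => R.1.support) hQP
  simp only [hQ, hsupp, List.cons.injEq, true_and] at hsupp'
  exact eq_of_chain_of_map_dst_eq hA hqch hch hqund hund hsupp'

end Net

/-- a root component of a semidirected acyclic graph is a tree all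
of whose edges are undirected: any edge joining two of its nodes is undirected, and
any two of its nodes are joined by a unique path of undirected edges. -/
theorem stmt3 {n : ℕ} (N : Net n)
    (hwT : ∀ e ∈ N.E, N.tail e ∈ N.V) (hwH : ∀ e ∈ N.E, N.head e ∈ N.V)
    (hA : N.Acyclic) (v0 : ℕ) (hroot : N.IsRootClass v0) :
    (∀ e ∈ N.E, N.UndirConn (N.tail e) v0 → N.UndirConn (N.head e) v0 →
        N.dir e = false) ∧
      (∀ u w, N.UndirConn v0 u → N.UndirConn v0 w →
        ∃! p : List (ℕ × Bool), N.IsPath u w p ∧ ∀ s ∈ p, N.dir s.1 = false) := by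
  refine ⟨fun e he _ hhead => ?_, fun u w hu hw => ?_⟩
  · by_contra hdir
    exact hroot.2 e he (Bool.not_eq_false _ ▸ hdir) hhead
  · exact Net.existsUnique_undirected_isPath hA (hu.mem_V hwT hwH hroot.1)
      ((hu.reachable hA).symm.trans (hw.reachable hA))

end
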